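/- arXiv:2003.00631 — 2 statements merged into one kernel-verified Lean document; each statement's English description precedes it below -/
import Mathlib

section
/- Let f : ℝ^d → ℝ be differentiable with L-Lipschitz gradient and f ≥ 0, and let λ, β > 0 with step size 0 < η < 2/(β+L). Define the RVSM iteration w^{t+1} = w^t - η∇f(w^t) - ηβ(w^t - u^t), u^{t+1} = H_{√(2λ/β)}(w^{t+1}), started from u^0 = H_{√(2λ/β)}(w^0). Then the sequence L_β(w^t,u^t) = f(w^t) + λ‖u^t‖₀ + (β/2)‖w^t - u^t‖² is monotonically non-increasing and converges to a limit. -/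
open scoped Classical

/-- Hard-thresholding operator: keeps entries with magnitude strictly above `α`. -/
noncomputable def Hthr {d : ℕ} (α : ℝ) (w : EuclideanSpace ℝ (Fin d)) :
    EuclideanSpace ℝ (Fin d) :=
  WithLp.toLp 2 (fun i => if α < |w i| then w i else 0)

/-- ℓ⁰ "norm": number of nonzero entries. -/
noncomputable def norm0 {d : ℕ} (u : EuclideanSpace ℝ (Fin d)) : ℝ :=
  ((Finset.univ : Finset (Fin d)).filter fun i => u i ≠ 0).card

/-!
Each RVSM iteration is one round of alternating minimisation of `L_β`. For fixed `u`, the map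
`z ↦ f z + β / 2 * ‖z - u‖ ^ 2` has the `(L + β)`-Lipschitz gradient `∇f z + β • (z - u)`, and the
`w`-update is a gradient step on it with `η * (L + β) < 2`, so by the descent lemma it does not
increase `L_β`. For fixed `w`, hard thresholding at `√(2λ/β)` minimises
`u ↦ λ * ‖u‖₀ + β / 2 * ‖w - u‖ ^ 2` coordinate by coordinate: keeping a coordinate `x` costs `λ`,
zeroing it costs `β * x ^ 2 / 2`, and the threshold is where the two agree. Hence `L_β(wᵗ, uᵗ)` is
non-increasing and bounded below by `0`, so it converges.
-/

section Descent

variable {E : Type*} [NormedAddCommGroup E] [InnerProductSpace ℝ E] [CompleteSpace E]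
  {F : E → ℝ} {G : E → E} {M : ℝ}

theorem descent_lemma (hF : ∀ z, HasGradientAt F (G z) z)
    (hG : ∀ p q, ‖G q - G p‖ ≤ M * ‖q - p‖) (x y : E) :
    F y ≤ F x + inner ℝ (G x) (y - x) + M / 2 * ‖y - x‖ ^ 2 := by
  set v := y - x
  -- `F` along the segment minus its quadratic upper model; the Lipschitz bound makes it antitone.
  let φ : ℝ → ℝ := fun t => F (x + t • v) - t * inner ℝ (G x) v - M / 2 * t ^ 2 * ‖v‖ ^ 2
  have hφ : ∀ t, HasDerivAt φ
      (inner ℝ (G (x + t • v)) v - inner ℝ (G x) v - M * t * ‖v‖ ^ 2) t := by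
    intro t
    have hline : HasDerivAt (fun s : ℝ => x + s • v) v t := by
      simpa using ((hasDerivAt_id t).smul_const v).const_add x
    have hFline := (hF (x + t • v)).hasFDerivAt.comp_hasDerivAt t hline
    simp only [InnerProductSpace.toDual_apply_apply] at hFline
    refine ((hFline.sub ((hasDerivAt_id t).mul_const (inner ℝ (G x) v))).sub
      (((hasDerivAt_pow 2 t).const_mul (M / 2)).mul_const (‖v‖ ^ 2))).congr_deriv ?_
    simp only [Nat.cast_ofNat, one_mul, Nat.reduceSub, pow_one]
    ring
  have hφ' : ∀ t ∈ interior (Set.Ici (0 : ℝ)),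
      inner ℝ (G (x + t • v)) v - inner ℝ (G x) v - M * t * ‖v‖ ^ 2 ≤ 0 := by
    intro t ht
    rw [interior_Ici, Set.mem_Ioi] at ht
    calc inner ℝ (G (x + t • v)) v - inner ℝ (G x) v - M * t * ‖v‖ ^ 2
        = inner ℝ (G (x + t • v) - G x) v - M * t * ‖v‖ ^ 2 := by rw [inner_sub_left]
      _ ≤ ‖G (x + t • v) - G x‖ * ‖v‖ - M * t * ‖v‖ ^ 2 := by
          gcongr; exact real_inner_le_norm _ _
      _ ≤ M * ‖t • v‖ * ‖v‖ - M * t * ‖v‖ ^ 2 := by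
          gcongr; simpa using hG x (x + t • v)
      _ = 0 := by rw [norm_smul, Real.norm_of_nonneg ht.le]; ring
  have hanti : AntitoneOn φ (Set.Ici 0) :=
    antitoneOn_of_hasDerivWithinAt_nonpos (convex_Ici 0)
      (fun t _ => (hφ t).continuousAt.continuousWithinAt)
      (fun t _ => (hφ t).hasDerivWithinAt) hφ'
  have h10 : φ 1 ≤ φ 0 := hanti Set.self_mem_Ici (Set.mem_Ici.2 zero_le_one) zero_le_one
  simp only [φ, one_smul, one_pow, one_mul, zero_smul, add_zero, zero_mul, sub_zero, ne_eq,
    OfNat.ofNat_ne_zero, not_false_eq_true, zero_pow, mul_zero, add_sub_cancel, v] at h10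
  linarith

theorem gradient_step_le (hF : ∀ z, HasGradientAt F (G z) z)
    (hG : ∀ p q, ‖G q - G p‖ ≤ M * ‖q - p‖) {η : ℝ} (hη : 0 ≤ η) (hηM : η * M ≤ 2) (x : E) :
    F (x - η • G x) ≤ F x := by
  have h := descent_lemma hF hG x (x - η • G x)
  rw [sub_sub_cancel_left, inner_neg_right, real_inner_smul_right, real_inner_self_eq_norm_sq,
    norm_neg, norm_smul, Real.norm_of_nonneg hη] at h
  nlinarith [mul_nonneg (mul_nonneg hη (sub_nonneg.2 hηM)) (sq_nonneg ‖G x‖)]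

theorem HasGradientAt.add_half_mul_norm_sub_sq {f : E → ℝ} {f' x : E} (hf : HasGradientAt f f' x)
    (β : ℝ) (c : E) :
    HasGradientAt (fun z => f z + β / 2 * ‖z - c‖ ^ 2) (f' + β • (x - c)) x := by
  rw [hasGradientAt_iff_hasFDerivAt] at hf ⊢
  refine (hf.add (((hasFDerivAt_id x).sub_const c).norm_sq.const_mul (β / 2))).congr_fderiv ?_
  ext y
  simp
  ring

end Descent

noncomputable def l0ProxCost (lam β x c : ℝ) : ℝ :=
  lam * (if c = 0 then 0 else 1) + β / 2 * (x - c) ^ 2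

theorem l0ProxCost_threshold_le {lam β α : ℝ} (hβ : 0 ≤ β) (hα : 0 ≤ α)
    (hαβ : β * α ^ 2 = 2 * lam) (x c : ℝ) :
    l0ProxCost lam β x (if α < |x| then x else 0) ≤ l0ProxCost lam β x c := by
  have hcost : ∀ c, c ≠ 0 → lam ≤ l0ProxCost lam β x c := fun c hc => by
    simp only [l0ProxCost, if_neg hc]; nlinarith [sq_nonneg (x - c)]
  by_cases hx : α < |x|
  · have hx0 : x ≠ 0 := by rintro rfl; simp at hx; linarith
    rw [if_pos hx]
    by_cases hc : c = 0
    · have : α ^ 2 ≤ x ^ 2 := by rw [← sq_abs x]; gcongr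
      simp only [l0ProxCost, hc, hx0, ↓reduceIte, sub_zero, sub_self]; nlinarith
    · simpa [l0ProxCost, hx0] using hcost c hc
  · have : x ^ 2 ≤ α ^ 2 := by rw [← sq_abs x]; gcongr; exact not_lt.1 hx
    rw [if_neg hx]
    by_cases hc : c = 0
    · rw [hc]
    · refine le_trans ?_ (hcost c hc)
      simp only [l0ProxCost, ↓reduceIte, sub_zero]; nlinarith

section Sparse

variable {d : ℕ}

theorem l0_add_norm_sub_sq_eq_sum (lam β : ℝ) (x v : EuclideanSpace ℝ (Fin d)) :
    lam * norm0 v + β / 2 * ‖x - v‖ ^ 2 = ∑ i, l0ProxCost lam β (x i) (v i) := by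
  have hnorm0 : norm0 v = ∑ i, if v i = 0 then (0 : ℝ) else 1 := by
    simp [norm0, Finset.sum_ite, Finset.filter_not]
  rw [hnorm0, EuclideanSpace.norm_sq_eq, Finset.mul_sum, Finset.mul_sum, ← Finset.sum_add_distrib]
  simp [l0ProxCost, sq_abs]

theorem isMinOn_Hthr {lam β : ℝ} (hβ : 0 < β) (hlam : 0 ≤ lam) (x : EuclideanSpace ℝ (Fin d)) :
    IsMinOn (fun v => lam * norm0 v + β / 2 * ‖x - v‖ ^ 2) Set.univ
      (Hthr (Real.sqrt (2 * lam / β)) x) := by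
  refine isMinOn_iff.2 fun v _ => ?_
  have hαβ : β * Real.sqrt (2 * lam / β) ^ 2 = 2 * lam := by
    rw [Real.sq_sqrt (by positivity)]; field_simp
  simp only [l0_add_norm_sub_sq_eq_sum]
  exact Finset.sum_le_sum fun i _ =>
    l0ProxCost_threshold_le hβ.le (Real.sqrt_nonneg _) hαβ (x i) (v i)

noncomputable def rvsmLagrangian (f : EuclideanSpace ℝ (Fin d) → ℝ) (lam β : ℝ)
    (w u : EuclideanSpace ℝ (Fin d)) : ℝ :=
  f w + lam * norm0 u + β / 2 * ‖w - u‖ ^ 2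

theorem rvsmLagrangian_step_le {f : EuclideanSpace ℝ (Fin d) → ℝ} {L β lam η : ℝ}
    (hdiff : Differentiable ℝ f)
    (hLip : ∀ x y, ‖gradient f y - gradient f x‖ ≤ L * ‖y - x‖)
    (hβ : 0 < β) (hlam : 0 ≤ lam) (hη : 0 ≤ η) (hηL : η * (L + β) ≤ 2)
    {w u w' : EuclideanSpace ℝ (Fin d)}
    (hw' : w' = w - η • gradient f w - (η * β) • (w - u)) :
    rvsmLagrangian f lam β w' (Hthr (Real.sqrt (2 * lam / β)) w') ≤ rvsmLagrangian f lam β w u := by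
  let G : EuclideanSpace ℝ (Fin d) → EuclideanSpace ℝ (Fin d) :=
    fun z => gradient f z + β • (z - u)
  have hG : ∀ z, HasGradientAt (fun z => f z + β / 2 * ‖z - u‖ ^ 2) (G z) z := fun z =>
    (hdiff z).hasGradientAt.add_half_mul_norm_sub_sq β u
  have hGLip : ∀ p q, ‖G q - G p‖ ≤ (L + β) * ‖q - p‖ := fun p q =>
    calc ‖G q - G p‖ = ‖(gradient f q - gradient f p) + β • (q - p)‖ := by
          congr 1; simp only [G]; module
      _ ≤ L * ‖q - p‖ + β * ‖q - p‖ := by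
          grw [norm_add_le, hLip p q, norm_smul, Real.norm_of_nonneg hβ.le]
      _ = (L + β) * ‖q - p‖ := by ring
  have hw'G : w' = w - η • G w := by rw [hw']; simp only [G]; module
  have hdescent := gradient_step_le hG hGLip hη hηL w
  have hmin := isMinOn_iff.1 (isMinOn_Hthr hβ hlam w') u (Set.mem_univ u)
  rw [← hw'G] at hdescent
  unfold rvsmLagrangian
  linarith

end Sparse

theorem rvsm_lagrangian_monotone_converges_general {d : ℕ}
    (f : EuclideanSpace ℝ (Fin d) → ℝ) (L β lam η : ℝ)
    (hβ : 0 < β) (hlam : 0 < lam) (hη : 0 < η) (hη2 : η < 2 / (β + L))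
    (hdiff : Differentiable ℝ f)
    (hLip : ∀ x y : EuclideanSpace ℝ (Fin d),
      ‖gradient f y - gradient f x‖ ≤ L * ‖y - x‖)
    (hf0 : ∀ x, 0 ≤ f x)
    (w u : ℕ → EuclideanSpace ℝ (Fin d))
    (hw : ∀ t, w (t + 1) = w t - η • gradient f (w t) - (η * β) • (w t - u t))
    (hu : ∀ t, u (t + 1) = Hthr (Real.sqrt (2 * lam / β)) (w (t + 1))) :
    (∀ t, f (w (t + 1)) + lam * norm0 (u (t + 1)) + β / 2 * ‖w (t + 1) - u (t + 1)‖ ^ 2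
        ≤ f (w t) + lam * norm0 (u t) + β / 2 * ‖w t - u t‖ ^ 2) ∧
    ∃ l : ℝ, Filter.Tendsto
      (fun t => f (w t) + lam * norm0 (u t) + β / 2 * ‖w t - u t‖ ^ 2)
      Filter.atTop (nhds l) := by
  have hηL : η * (L + β) ≤ 2 := by
    rcases le_or_gt (β + L) 0 with hβL | hβL
    · nlinarith
    · rw [lt_div_iff₀ hβL] at hη2; linarith
  have hstep : ∀ t, rvsmLagrangian f lam β (w (t + 1)) (u (t + 1))
      ≤ rvsmLagrangian f lam β (w t) (u t) := fun t => by
    rw [hu t]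
    exact rvsmLagrangian_step_le hdiff hLip hβ hlam.le hη.le hηL (hw t)
  have hbdd : BddBelow (Set.range fun t => rvsmLagrangian f lam β (w t) (u t)) := by
    refine ⟨0, ?_⟩
    rintro _ ⟨t, rfl⟩
    have : (0 : ℝ) ≤ norm0 (u t) := Nat.cast_nonneg _
    have := hf0 (w t)
    unfold rvsmLagrangian; positivity
  exact ⟨hstep, _, tendsto_atTop_ciInf (antitone_nat_of_succ_le hstep) hbdd⟩

theorem rvsm_lagrangian_monotone_converges {d : ℕ}
    (f : EuclideanSpace ℝ (Fin d) → ℝ) (L β lam η : ℝ)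
    (hβ : 0 < β) (hlam : 0 < lam) (hL : 0 ≤ L) (hη : 0 < η) (hη2 : η < 2 / (β + L))
    (hdiff : Differentiable ℝ f)
    (hLip : ∀ x y : EuclideanSpace ℝ (Fin d),
      ‖gradient f y - gradient f x‖ ≤ L * ‖y - x‖)
    (hf0 : ∀ x, 0 ≤ f x)
    (w u : ℕ → EuclideanSpace ℝ (Fin d))
    (hu0 : u 0 = Hthr (Real.sqrt (2 * lam / β)) (w 0))
    (hw : ∀ t, w (t + 1) = w t - η • gradient f (w t) - (η * β) • (w t - u t))
    (hu : ∀ t, u (t + 1) = Hthr (Real.sqrt (2 * lam / β)) (w (t + 1))) :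
    (∀ t, f (w (t + 1)) + lam * norm0 (u (t + 1)) + β / 2 * ‖w (t + 1) - u (t + 1)‖ ^ 2
        ≤ f (w t) + lam * norm0 (u t) + β / 2 * ‖w t - u t‖ ^ 2) ∧
    ∃ l : ℝ, Filter.Tendsto
      (fun t => f (w t) + lam * norm0 (u t) + β / 2 * ‖w t - u t‖ ^ 2)
      Filter.atTop (nhds l) :=
  rvsm_lagrangian_monotone_converges_general f L β lam η hβ hlam hη hη2 hdiff hLip hf0 w u hw hu
end

section
/- Let λ, β > 0 and α = √(2λ/β). The map w ↦ λ‖H_α(w)‖₀ + (β/2)‖w - H_α(w)‖₂², i.e. the value of the inner minimization in the RVSM Lagrangian, equals Σ_{i=1}^d min(λ, (β/2)w_i²), which is a continuous function of w. -/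
open scoped Classical

/-!
Hard thresholding at `α` acts coordinatewise, and with `lam = (β/2) α²` each coordinate `x` pays
either `lam` (when `|x| > α`, so it is kept) or `(β/2) x²` (when it is zeroed), whichever is
smaller. The value is therefore `∑ i, min lam ((β/2) w_i²)`, visibly continuous in `w`.
-/

theorem Hthr_apply {d : ℕ} (α : ℝ) (w : EuclideanSpace ℝ (Fin d)) (i : Fin d) :
    Hthr α w i = if α < |w i| then w i else 0 :=
  rfl

theorem mul_norm0_eq_sum {d : ℕ} (lam : ℝ) (u : EuclideanSpace ℝ (Fin d)) :
    lam * norm0 u = ∑ i, if u i = 0 then 0 else lam := by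
  rw [norm0, Finset.sum_ite, Finset.sum_const_zero, zero_add, Finset.sum_const, nsmul_eq_mul,
    mul_comm]

theorem hardThreshold_cost_eq_min {α c lam : ℝ} (hα : 0 ≤ α) (hc : 0 ≤ c)
    (hlam : c * α ^ 2 = lam) (x : ℝ) :
    (if (if α < |x| then x else 0) = 0 then 0 else lam)
        + c * (x - if α < |x| then x else 0) ^ 2
      = min lam (c * x ^ 2) := by
  subst hlam
  by_cases hkeep : α < |x|
  · have hx : x ≠ 0 := fun h => by simp [h] at hkeep; linarith
    have hsq : α ^ 2 ≤ x ^ 2 := sq_le_sq.mpr (by rw [abs_of_nonneg hα]; exact hkeep.le)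
    rw [if_pos hkeep, if_neg hx, min_eq_left (mul_le_mul_of_nonneg_left hsq hc)]
    ring
  · have hsq : x ^ 2 ≤ α ^ 2 := sq_le_sq' (abs_le.mp (not_lt.mp hkeep)).1
      (abs_le.mp (not_lt.mp hkeep)).2
    rw [if_neg hkeep, if_pos rfl, min_eq_right (mul_le_mul_of_nonneg_left hsq hc)]
    ring

theorem Hthr_value_eq_sum_min {d : ℕ} {α c lam : ℝ} (hα : 0 ≤ α) (hc : 0 ≤ c)
    (hlam : c * α ^ 2 = lam) (w : EuclideanSpace ℝ (Fin d)) :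
    lam * norm0 (Hthr α w) + c * ‖w - Hthr α w‖ ^ 2 = ∑ i, min lam (c * w i ^ 2) := by
  rw [mul_norm0_eq_sum, EuclideanSpace.norm_sq_eq, Finset.mul_sum, ← Finset.sum_add_distrib]
  refine Finset.sum_congr rfl fun i _ => ?_
  simp only [PiLp.sub_apply, Real.norm_eq_abs, sq_abs, Hthr_apply]
  exact hardThreshold_cost_eq_min hα hc hlam (w i)

theorem rvsm_value_envelope {d : ℕ} (lam β : ℝ) (hlam : 0 < lam) (hβ : 0 < β) :
    (∀ w : EuclideanSpace ℝ (Fin d),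
      lam * norm0 (Hthr (Real.sqrt (2 * lam / β)) w)
          + β / 2 * ‖w - Hthr (Real.sqrt (2 * lam / β)) w‖ ^ 2
        = ∑ i : Fin d, min lam (β / 2 * (w i) ^ 2)) ∧
    Continuous (fun w : EuclideanSpace ℝ (Fin d) =>
      lam * norm0 (Hthr (Real.sqrt (2 * lam / β)) w)
        + β / 2 * ‖w - Hthr (Real.sqrt (2 * lam / β)) w‖ ^ 2) := by
  have hscale : β / 2 * Real.sqrt (2 * lam / β) ^ 2 = lam := by
    rw [Real.sq_sqrt (by positivity)]
    field_simp
  have hvalue := Hthr_value_eq_sum_min (d := d) (Real.sqrt_nonneg _) (by positivity) hscale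
  refine ⟨hvalue, ?_⟩
  simp only [hvalue]
  fun_prop
end
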